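/- arXiv:2503.15938 — 7 statements merged into one kernel-verified Lean document; each statement's English description precedes it below -/
import Mathlib

section
/- Let E be an extension of a Leibniz conformal algebra R by a Leibniz conformal algebra H, and let s, s' be two sections of the projection p: E → R. Then the non-abelian 2-cocycles (l, r, χ) and (l', r', χ') induced by s and s' respectively are equivalent, via the ℂ[∂]-module homomorphism β(a) = s(a) − s'(a). -/
noncomputable section

/-- `PM R` models `R[λ]`: polynomials with coefficients in `R`, as finitely
supported coefficient sequences. -/
abbrev PM (R : Type) [AddCommGroup R] : Type := ℕ →₀ R

/-- Evaluation of an element of `R[λ]` at a scalar `l ∈ ℂ`. -/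
def ev {R : Type} [AddCommGroup R] [Module ℂ R] (l : ℂ) (p : PM R) : R :=
  p.sum fun n c => l ^ n • c

/-- Evaluation of an element of `R[λ]` at the operator `-∂ - l`, where `∂ = D`. -/
def evD {R : Type} [AddCommGroup R] [Module ℂ R] (D : R →ₗ[ℂ] R) (l : ℂ) (p : PM R) : R :=
  p.sum fun n c => ((-D - l • LinearMap.id : Module.End ℂ R) ^ n) c

/-- A Leibniz conformal algebra: a `ℂ[∂]`-module (`D` is the action of `∂`)
with a λ-bracket `Br : R → R → R[λ]` satisfying conformal sesquilinearity and
the (left) Jacobi identity; identities are stated pointwise in the λ-variables,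
which over `ℂ` is equivalent to the formal polynomial identities. -/
structure LCA (R : Type) [AddCommGroup R] [Module ℂ R] where
  D : R →ₗ[ℂ] R
  Br : R →ₗ[ℂ] R →ₗ[ℂ] PM R
  sesq1 : ∀ (l : ℂ) (a b : R), ev l (Br (D a) b) = (-l) • ev l (Br a b)
  sesq2 : ∀ (l : ℂ) (a b : R), ev l (Br a (D b)) = D (ev l (Br a b)) + l • ev l (Br a b)
  jacobi : ∀ (l m : ℂ) (a b c : R),
    ev l (Br a (ev m (Br b c))) =
      ev (l + m) (Br (ev l (Br a b)) c) + ev m (Br b (ev l (Br a c)))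

/-- The λ-bracket `[a_l b]` evaluated at the scalar `l`. -/
def LCA.br {R : Type} [AddCommGroup R] [Module ℂ R] (A : LCA R) (l : ℂ) (a b : R) : R :=
  ev l (A.Br a b)

/-- A homomorphism of Leibniz conformal algebras. -/
structure IsHom {R H : Type} [AddCommGroup R] [Module ℂ R] [AddCommGroup H] [Module ℂ H]
    (A : LCA R) (B : LCA H) (f : R →ₗ[ℂ] H) : Prop where
  map_D : ∀ a, f (A.D a) = B.D (f a)
  map_br : ∀ (l : ℂ) (a b : R), f (A.br l a b) = B.br l (f a) (f b)

section Aux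

variable {R : Type} [AddCommGroup R] [Module ℂ R]

/-- `ev` as a linear map. -/
def evL (l : ℂ) : PM R →ₗ[ℂ] R :=
  Finsupp.lsum ℂ fun n => (l ^ n) • (LinearMap.id : R →ₗ[ℂ] R)

lemma ev_eq (l : ℂ) (q : PM R) : ev l q = evL l q := by
  simp [ev, evL, Finsupp.lsum_apply, Finsupp.sum]

/-- `evD` as a linear map. -/
def evDL (D : R →ₗ[ℂ] R) (l : ℂ) : PM R →ₗ[ℂ] R :=
  Finsupp.lsum ℂ fun n => (((-D - l • LinearMap.id : Module.End ℂ R) ^ n) : R →ₗ[ℂ] R)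

lemma evD_eq (D : R →ₗ[ℂ] R) (l : ℂ) (q : PM R) : evD D l q = evDL D l q := by
  simp [evD, evDL, Finsupp.lsum_apply, Finsupp.sum]

lemma br_sub_left (A : LCA R) (l : ℂ) (a a' b : R) :
    A.br l (a - a') b = A.br l a b - A.br l a' b := by
  simp [LCA.br, ev_eq, map_sub]

lemma br_sub_right (A : LCA R) (l : ℂ) (a b b' : R) :
    A.br l a (b - b') = A.br l a b - A.br l a b' := by
  simp [LCA.br, ev_eq, map_sub]

end Aux

/-- for an extension `0 → H →^α E →^p R → 0` of Leibniz conformal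
algebras and two sections `s, s'` of `p`, the induced non-abelian 2-cocycles
`(l,r,χ)` and `(l',r',χ')` (given by `l(a)_λ h = [s(a)_λ h]`,
`r(a)_λ h = [h_{-∂-λ} s(a)]`, `χ_λ(a,b) = [s(a)_λ s(b)] − s[a_λ b]`, and
similarly for `s'`) are equivalent via the `ℂ[∂]`-module homomorphism
`β(a) = s(a) − s'(a)`; all identities are expressed inside `E` via `α`. -/
theorem stmt6 {R H W : Type} [AddCommGroup R] [Module ℂ R] [AddCommGroup H] [Module ℂ H]
    [AddCommGroup W] [Module ℂ W]
    (A : LCA R) (B : LCA H) (ES : LCA W)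
    (α : H →ₗ[ℂ] W) (p : W →ₗ[ℂ] R)
    (hα : IsHom B ES α) (hp : IsHom ES A p)
    (hinj : Function.Injective α) (hsurj : Function.Surjective p)
    (hex : ∀ x : W, p x = 0 ↔ x ∈ Set.range α)
    (s s' : R →ₗ[ℂ] W)
    (hsD : ∀ a, s (A.D a) = ES.D (s a)) (hs : ∀ a, p (s a) = a)
    (hs'D : ∀ a, s' (A.D a) = ES.D (s' a)) (hs' : ∀ a, p (s' a) = a) :
    ∃ β : R →ₗ[ℂ] H,
      (∀ a, α (β a) = s a - s' a) ∧
      (∀ a, β (A.D a) = B.D (β a)) ∧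
      -- l(a) − l'(a) = ad^L_{β(a)}
      (∀ (lm : ℂ) (a : R) (h : H),
        ES.br lm (s a) (α h) - ES.br lm (s' a) (α h) = ES.br lm (α (β a)) (α h)) ∧
      -- r(a) − r'(a) = ad^R_{β(a)}
      (∀ (lm : ℂ) (a : R) (h : H),
        evD ES.D lm (ES.Br (α h) (s a)) - evD ES.D lm (ES.Br (α h) (s' a)) =
          evD ES.D lm (ES.Br (α h) (α (β a)))) ∧
      -- χ_λ(a,b) − χ'_λ(a,b)
      --   = l'(a)_λ β(b) + r'(b)_{-∂-λ} β(a) − β [a_λ b] + [β(a)_λ β(b)]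
      (∀ (lm : ℂ) (a b : R),
        (ES.br lm (s a) (s b) - s (A.br lm a b))
            - (ES.br lm (s' a) (s' b) - s' (A.br lm a b)) =
          ES.br lm (s' a) (α (β b)) + ES.br lm (α (β a)) (s' b)
            - α (β (A.br lm a b)) + ES.br lm (α (β a)) (α (β b))) := by
  classical
  have key : ∀ a : R, ∃ h : H, α h = s a - s' a := by
    intro a
    have h0 : p (s a - s' a) = 0 := by simp [hs, hs']
    rcases (hex _).mp h0 with ⟨h, hh⟩
    exact ⟨h, hh⟩
  set g : R → H := fun a => (key a).choose with hgdef
  have hg : ∀ a, α (g a) = s a - s' a := fun a => (key a).choose_spec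
  have β : R →ₗ[ℂ] H :=
    { toFun := g
      map_add' := by
        intro a b
        apply hinj
        simp only [map_add, hg]
        abel
      map_smul' := by
        intro c a
        apply hinj
        simp only [map_smul, hg, RingHom.id_apply]
        simp [smul_sub] }
  refine ⟨{ toFun := g
            map_add' := by
              intro a b
              apply hinj
              simp only [map_add, hg]
              abel
            map_smul' := by
              intro c a
              apply hinj
              simp only [map_smul, hg, RingHom.id_apply]
              simp [smul_sub] }, ?_, ?_, ?_, ?_, ?_⟩
  · exact hg
  · intro a
    apply hinj
    show α (g (A.D a)) = α (B.D (g a))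
    simp only [hα.map_D, hg, hsD, hs'D, map_sub]
  · intro lm a h
    rw [← br_sub_left]
    show _ = ES.br lm (α (g a)) (α h)
    rw [hg]
  · intro lm a h
    show evD ES.D lm (ES.Br (α h) (s a)) - evD ES.D lm (ES.Br (α h) (s' a)) =
      evD ES.D lm (ES.Br (α h) (α (g a)))
    rw [hg]
    simp [evD_eq, map_sub]
  · intro lm a b
    show _ = ES.br lm (s' a) (α (g b)) + ES.br lm (α (g a)) (s' b)
      - α (g (A.br lm a b)) + ES.br lm (α (g a)) (α (g b))
    simp only [hg, br_sub_left, br_sub_right]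
    abel
end
end

section
/- If two non-abelian 2-cocycles (l, r, χ) and (l', r', χ') of R with values in H are equivalent via a ℂ[∂]-module homomorphism β: R → H, then the map φ: R ⊕ H_{(l,r,χ)} → R ⊕ H_{(l',r',χ')} defined by φ(a, h) = (a, h − β(a)) is an isomorphism of Leibniz conformal algebras commuting with the inclusions of H and projections onto R, so the two extensions are equivalent. -/
noncomputable section

/-- A non-abelian 2-cocycle of the Leibniz conformal algebra `A` (on `R`) with
values in the Leibniz conformal algebra `B` (on `H`): `ℂ[∂]`-module maps
`l, r : R → CDer^L(H), CDer^R(H)` and a conformal bilinear `χ : R × R → H[λ]`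
satisfying the five compatibility identities. -/
structure Cocycle {R H : Type} [AddCommGroup R] [Module ℂ R] [AddCommGroup H] [Module ℂ H]
    (A : LCA R) (B : LCA H) where
  l : R →ₗ[ℂ] H →ₗ[ℂ] PM H
  r : R →ₗ[ℂ] H →ₗ[ℂ] PM H
  chi : R →ₗ[ℂ] R →ₗ[ℂ] PM H
  l_conf : ∀ (lm : ℂ) (a : R) (h : H),
    ev lm (l a (B.D h)) = B.D (ev lm (l a h)) + lm • ev lm (l a h)
  r_conf : ∀ (lm : ℂ) (a : R) (h : H),
    ev lm (r a (B.D h)) = B.D (ev lm (r a h)) + lm • ev lm (r a h)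
  l_hom : ∀ (lm : ℂ) (a : R) (h : H), ev lm (l (A.D a) h) = (-lm) • ev lm (l a h)
  r_hom : ∀ (lm : ℂ) (a : R) (h : H), ev lm (r (A.D a) h) = (-lm) • ev lm (r a h)
  chi_s1 : ∀ (lm : ℂ) (a b : R), ev lm (chi (A.D a) b) = (-lm) • ev lm (chi a b)
  chi_s2 : ∀ (lm : ℂ) (a b : R),
    ev lm (chi a (A.D b)) = B.D (ev lm (chi a b)) + lm • ev lm (chi a b)
  l_der : ∀ (lm m : ℂ) (a : R) (h1 h2 : H),
    ev lm (l a (B.br m h1 h2)) =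
      B.br m h1 (ev lm (l a h2)) + B.br (lm + m) (ev lm (l a h1)) h2
  r_der : ∀ (lm m : ℂ) (a : R) (h1 h2 : H),
    ev lm (r a (B.br m h1 h2)) =
      B.br m h1 (ev lm (r a h2)) - evD B.D m (B.Br h2 (ev lm (r a h1)))
  c1 : ∀ (lm m : ℂ) (a : R) (h1 h2 : H),
    B.br (lm + m) (ev lm (l a h1) + ev lm (r a h1)) h2 = 0
  c2 : ∀ (lm m : ℂ) (a b : R) (h : H),
    ev lm (r a (ev m (r b h) + ev m (l b h))) = 0
  c3 : ∀ (lm m : ℂ) (a b : R) (h : H),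
    ev lm (l a (ev m (l b h))) - ev m (l b (ev lm (l a h)))
      - ev (lm + m) (l (A.br lm a b) h) = B.br (lm + m) (ev lm (chi a b)) h
  c4 : ∀ (lm m : ℂ) (a b : R) (h : H),
    ev lm (l a (ev m (r b h))) - ev m (r b (ev lm (l a h)))
      - ev (lm + m) (r (A.br lm a b) h) = evD B.D (lm + m) (B.Br h (ev lm (chi a b)))
  c5 : ∀ (lm m : ℂ) (a b c : R),
    ev lm (chi a (A.br m b c)) - ev m (chi b (A.br lm a c))
      - ev (lm + m) (chi (A.br lm a b) c)
      + ev lm (l a (ev m (chi b c))) - ev m (l b (ev lm (chi a c)))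
      + evD B.D (lm + m) (r c (ev lm (chi a b))) = 0

namespace Stmt7Aux

variable {H : Type} [AddCommGroup H] [Module ℂ H]

lemma ev_zero (l : ℂ) : ev l (0 : PM H) = 0 := Finsupp.sum_zero_index

lemma ev_add (l : ℂ) (p q : PM H) : ev l (p + q) = ev l p + ev l q :=
  Finsupp.sum_add_index' (fun n => by simp) (fun n b1 b2 => smul_add _ _ _)

lemma ev_sub (l : ℂ) (p q : PM H) : ev l (p - q) = ev l p - ev l q :=
  Finsupp.sum_sub_index (fun n b1 b2 => smul_sub _ _ _)

lemma ev_single (l : ℂ) (n : ℕ) (c : H) : ev l (Finsupp.single n c) = l ^ n • c := by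
  classical
  simp [ev, Finsupp.sum_single_index]

lemma evD_add (D : H →ₗ[ℂ] H) (l : ℂ) (p q : PM H) : evD D l (p + q) = evD D l p + evD D l q :=
  Finsupp.sum_add_index' (fun n => by simp) (fun n b1 b2 => map_add _ _ _)

lemma evD_sub (D : H →ₗ[ℂ] H) (l : ℂ) (p q : PM H) : evD D l (p - q) = evD D l p - evD D l q :=
  Finsupp.sum_sub_index (fun n b1 b2 => map_sub _ _ _)

lemma evD_single (D : H →ₗ[ℂ] H) (l : ℂ) (n : ℕ) (c : H) :
    evD D l (Finsupp.single n c) = ((-D - l • LinearMap.id : Module.End ℂ H) ^ n) c := by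
  classical
  simp [evD, Finsupp.sum_single_index]

lemma ev_injective (p : PM H) (h : ∀ l : ℂ, ev l p = 0) : p = 0 := by
  classical
  ext n
  rw [Finsupp.coe_zero, Pi.zero_apply]
  set b := Module.Basis.ofVectorSpace ℂ H with hbdef
  have key : ∀ i, b.coord i (p n) = 0 := by
    intro i
    set g := b.coord i with hg
    set Q : Polynomial ℂ := p.sum (fun m c => Polynomial.monomial m (g c)) with hQ
    have hQeval : ∀ l : ℂ, Q.eval l = 0 := by
      intro l
      have h1 : Q.eval l = g (ev l p) := by
        rw [hQ, ev, Finsupp.sum, Finsupp.sum, Polynomial.eval_finset_sum, map_sum]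
        refine Finset.sum_congr rfl (fun m _ => ?_)
        rw [Polynomial.eval_monomial, map_smul, smul_eq_mul, mul_comm]
      rw [h1, h, map_zero]
    have hQ0 : Q = 0 := Polynomial.funext (fun r => by rw [hQeval, Polynomial.eval_zero])
    have hc : Q.coeff n = 0 := by rw [hQ0]; simp
    by_cases hn : n ∈ p.support
    · rw [hQ, Finsupp.sum, Polynomial.finset_sum_coeff] at hc
      simp only [Polynomial.coeff_monomial] at hc
      rwa [Finset.sum_ite_eq' p.support n (fun m => g (p m)), if_pos hn] at hc
    · rw [Finsupp.notMem_support_iff.mp hn, map_zero]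
  have : b.repr (p n) = 0 := by
    ext i
    simpa [Module.Basis.coord] using key i
  exact b.repr.map_eq_zero_iff.mp this

/-- substitution of `-∂ - λ` for `λ`, as a map on polynomials -/
def T (D : H →ₗ[ℂ] H) (p : PM H) : PM H :=
  p.sum fun n c => ∑ k ∈ Finset.range (n + 1),
    Finsupp.single k ((n.choose k : ℂ) • (((-D : Module.End ℂ H)) ^ (n - k)) (((-1 : ℂ) ^ k) • c))

def evHom (l : ℂ) : PM H →+ H where
  toFun := ev l
  map_zero' := ev_zero l
  map_add' := ev_add l

def evDHom (D : H →ₗ[ℂ] H) (l : ℂ) : PM H →+ H where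
  toFun := evD D l
  map_zero' := Finsupp.sum_zero_index
  map_add' := evD_add D l

lemma hcommX (D : H →ₗ[ℂ] H) (l : ℂ) :
    Commute (-(l • (1 : Module.End ℂ H))) (-D : Module.End ℂ H) := by
  apply Commute.neg_left
  apply Commute.neg_right
  ext x
  simp [Module.End.mul_apply, map_smul]

lemma ev_T (D : H →ₗ[ℂ] H) (l : ℂ) (p : PM H) : ev l (T D p) = evD D l p := by
  classical
  rw [T, Finsupp.sum, evD, Finsupp.sum]
  rw [show ev l = evHom (H := H) l from rfl, map_sum]
  refine Finset.sum_congr rfl (fun n _ => ?_)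
  rw [map_sum]
  set c := p n with hc
  have hx : (-D - l • LinearMap.id : Module.End ℂ H)
      = (-(l • (1 : Module.End ℂ H))) + (-D) := by
    ext x; simp; abel
  rw [hx, Commute.add_pow (hcommX D l), LinearMap.sum_apply]
  refine Finset.sum_congr rfl (fun k _ => ?_)
  show ev l (Finsupp.single k _) = _
  rw [ev_single]
  rw [neg_smul (l) (1 : Module.End ℂ H) |>.symm] -- -(l•1) = (-l)•1
  rw [smul_pow]
  simp only [one_pow, Module.End.mul_apply, LinearMap.smul_apply, Module.End.one_apply,
    Module.End.natCast_apply, map_smul, map_nsmul]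
  rw [smul_smul, smul_smul, ← Nat.cast_smul_eq_nsmul ℂ (n.choose k), smul_smul]
  congr 1
  rw [neg_pow]
  ring

lemma evD_T (D : H →ₗ[ℂ] H) (l : ℂ) (p : PM H) : evD D l (T D p) = ev l p := by
  classical
  rw [T, Finsupp.sum, ev, Finsupp.sum]
  rw [show evD D l = evDHom (H := H) D l from rfl, map_sum]
  refine Finset.sum_congr rfl (fun n _ => ?_)
  rw [map_sum]
  set c := p n with hc
  set X : Module.End ℂ H := -D - l • LinearMap.id with hX
  have hcomm : Commute (-X) (-D : Module.End ℂ H) := by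
    apply Commute.neg_left
    apply Commute.neg_right
    rw [hX]
    apply Commute.sub_left
    · exact (Commute.refl D).neg_left
    · apply Commute.smul_left
      ext x; simp [Module.End.mul_apply]
  have hsum : (-X + -D) ^ n = ∑ k ∈ Finset.range (n + 1),
      (-X) ^ k * (-D) ^ (n - k) * (n.choose k : Module.End ℂ H) := Commute.add_pow hcomm n
  have hXD : (-X + -D : Module.End ℂ H) = l • 1 := by
    rw [hX]; ext x; simp
  rw [hXD] at hsum
  have hfin : (l ^ n : ℂ) • c = ((l • (1 : Module.End ℂ H)) ^ n) c := by
    rw [smul_pow]; simp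
  rw [hfin, hsum, LinearMap.sum_apply]
  refine Finset.sum_congr rfl (fun k _ => ?_)
  show (evDHom D l) (Finsupp.single k _) = _
  show evD D l (Finsupp.single k _) = _
  rw [evD_single, ← hX]
  have hnegX : (-X) ^ k = ((-1 : ℂ) ^ k) • X ^ k := by
    rw [show -X = (-1 : ℂ) • X from by simp, smul_pow]
  rw [hnegX]
  simp only [Module.End.mul_apply, LinearMap.smul_apply, Module.End.natCast_apply,
    map_smul, map_nsmul]
  rw [Nat.cast_smul_eq_nsmul ℂ (n.choose k)]

end Stmt7Aux

open Stmt7Aux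

/-- if two non-abelian 2-cocycles `(l,r,χ)` and `(l',r',χ')` are
equivalent via a `ℂ[∂]`-module homomorphism `β : R → H`, then
`φ(a,h) = (a, h − β(a))` is an isomorphism of Leibniz conformal algebras
`R ⊕ H_{(l,r,χ)} → R ⊕ H_{(l',r',χ')}` commuting with the inclusion of `H`
and the projection onto `R`; hence the two extensions are equivalent. -/
theorem stmt7 {R H : Type} [AddCommGroup R] [Module ℂ R] [AddCommGroup H] [Module ℂ H]
    (A : LCA R) (B : LCA H) (c c' : Cocycle A B) (β : R →ₗ[ℂ] H)
    (hβD : ∀ a, β (A.D a) = B.D (β a))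
    -- equivalence of the two cocycles via β:
    (heql : ∀ (lm : ℂ) (a : R) (h : H),
      ev lm (c'.l a h) - ev lm (c.l a h) = B.br lm (β a) h)
    (heqr : ∀ (lm : ℂ) (a : R) (h : H),
      ev lm (c'.r a h) - ev lm (c.r a h) = evD B.D lm (B.Br h (β a)))
    (heqchi : ∀ (lm : ℂ) (a b : R),
      ev lm (c'.chi a b) =
        ev lm (c.chi a b) + ev lm (c.l a (β b)) + evD B.D lm (c.r b (β a))
          - β (A.br lm a b) + B.br lm (β a) (β b))
    -- the two semidirect-sum Leibniz conformal algebras: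
    (E E' : LCA (R × H))
    (hED : ∀ x : R × H, E.D x = (A.D x.1, B.D x.2))
    (hEbr : ∀ (lm : ℂ) (x y : R × H),
      E.br lm x y = (A.br lm x.1 y.1,
        ev lm (c.l x.1 y.2) + evD B.D lm (c.r y.1 x.2) + ev lm (c.chi x.1 y.1)
          + B.br lm x.2 y.2))
    (hE'D : ∀ x : R × H, E'.D x = (A.D x.1, B.D x.2))
    (hE'br : ∀ (lm : ℂ) (x y : R × H),
      E'.br lm x y = (A.br lm x.1 y.1,
        ev lm (c'.l x.1 y.2) + evD B.D lm (c'.r y.1 x.2) + ev lm (c'.chi x.1 y.1)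
          + B.br lm x.2 y.2)) :
    Function.Bijective (fun x : R × H => (x.1, x.2 - β x.1)) ∧
    (∀ x : R × H,
      (fun x : R × H => (x.1, x.2 - β x.1)) (E.D x) =
        E'.D ((fun x : R × H => (x.1, x.2 - β x.1)) x)) ∧
    (∀ (lm : ℂ) (x y : R × H),
      (fun x : R × H => (x.1, x.2 - β x.1)) (E.br lm x y) =
        E'.br lm ((fun x : R × H => (x.1, x.2 - β x.1)) x)
          ((fun x : R × H => (x.1, x.2 - β x.1)) y)) ∧
    (∀ h : H, (fun x : R × H => (x.1, x.2 - β x.1)) ((0 : R), h) = ((0 : R), h)) ∧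
    (∀ x : R × H, ((fun x : R × H => (x.1, x.2 - β x.1)) x).1 = x.1) := by
  have keyl : ∀ (lm : ℂ) (a : R) (h : H),
      ev lm (c'.l a h) = ev lm (c.l a h) + B.br lm (β a) h :=
    fun lm a h => sub_eq_iff_eq_add'.mp (heql lm a h)
  have keyr : ∀ (lm : ℂ) (a : R) (h : H),
      evD B.D lm (c'.r a h) = evD B.D lm (c.r a h) + B.br lm h (β a) := by
    intro lm a h
    have hz : ∀ μ : ℂ, ev μ (c'.r a h - c.r a h - T B.D (B.Br h (β a))) = 0 := by
      intro μ
      rw [ev_sub, ev_sub, ev_T, heqr, sub_self]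
    have hpq : c'.r a h - c.r a h = T B.D (B.Br h (β a)) :=
      sub_eq_zero.mp (ev_injective _ hz)
    have h2 : c'.r a h = c.r a h + T B.D (B.Br h (β a)) := sub_eq_iff_eq_add'.mp hpq
    rw [h2, evD_add, evD_T]
    rfl
  refine ⟨Function.bijective_iff_has_inverse.mpr
      ⟨fun x => (x.1, x.2 + β x.1), fun x => by simp, fun x => by simp⟩, ?_, ?_,
      fun h => by simp, fun x => rfl⟩
  · intro x
    simp only
    rw [hED, hE'D]
    simp [hβD, map_sub]
  · intro lm x y
    simp only
    rw [hEbr, hE'br]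
    rw [Prod.mk.injEq]
    refine ⟨rfl, ?_⟩
    simp only
    rw [map_sub (c'.l x.1), ev_sub, map_sub (c'.r y.1), evD_sub]
    rw [keyl lm x.1 y.2, keyl lm x.1 (β y.1), keyr lm y.1 x.2, keyr lm y.1 (β x.1),
      heqchi]
    have hbr : B.br lm (x.2 - β x.1) (y.2 - β y.1)
        = B.br lm x.2 y.2 - B.br lm (β x.1) y.2
          - (B.br lm x.2 (β y.1) - B.br lm (β x.1) (β y.1)) := by
      unfold LCA.br
      simp only [map_sub, LinearMap.sub_apply, ev_sub]
    rw [hbr]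
    abel
end
end

section
/- For a non-abelian extension E of R by H and f ∈ Aut_H(E), the induced map f̂ = p ∘ f ∘ s: R → R is independent of the choice of section s, is bijective, and is an automorphism of the Leibniz conformal algebra R. -/
noncomputable section

/-- for a non-abelian extension `0 → H →^α E →^p R → 0` and
`f ∈ Aut_H(E)`, the induced map `f̂ = p ∘ f ∘ s : R → R` does not depend on the
choice of the section `s`, is bijective, and is an automorphism of the Leibniz
conformal algebra `R` (it commutes with `∂` and preserves the λ-brackets). -/
theorem stmt10 {R H W : Type} [AddCommGroup R] [Module ℂ R] [AddCommGroup H] [Module ℂ H]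
    [AddCommGroup W] [Module ℂ W]
    (A : LCA R) (B : LCA H) (ES : LCA W)
    (α : H →ₗ[ℂ] W) (p : W →ₗ[ℂ] R)
    (hα : IsHom B ES α) (hp : IsHom ES A p)
    (hinj : Function.Injective α) (hsurj : Function.Surjective p)
    (hex : ∀ x : W, p x = 0 ↔ x ∈ Set.range α)
    (s : R →ₗ[ℂ] W) (hsD : ∀ a, s (A.D a) = ES.D (s a)) (hs : ∀ a, p (s a) = a)
    (f : W ≃ₗ[ℂ] W) (hf : IsHom ES ES (f : W →ₗ[ℂ] W))
    (hfH : ⇑f '' Set.range ⇑α = Set.range ⇑α) :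
    -- independence of the section
    (∀ s' : R →ₗ[ℂ] W, (∀ a, s' (A.D a) = ES.D (s' a)) → (∀ a, p (s' a) = a) →
      ∀ a, p (f (s a)) = p (f (s' a))) ∧
    -- bijectivity of f̂
    Function.Bijective (fun a : R => p (f (s a))) ∧
    -- f̂ commutes with ∂
    (∀ a, p (f (s (A.D a))) = A.D (p (f (s a)))) ∧
    -- f̂ preserves the λ-bracket
    (∀ (lm : ℂ) (a b : R),
      p (f (s (A.br lm a b))) = A.br lm (p (f (s a))) (p (f (s b)))) := by

  have key : ∀ x : W, p x = 0 → p (f x) = 0 := by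
    intro x hx
    rw [hex] at hx ⊢
    rw [← hfH]
    exact ⟨x, hx, rfl⟩
  have keyrev : ∀ x : W, p (f x) = 0 → p x = 0 := by
    intro x hx
    rw [hex] at hx
    rw [← hfH] at hx
    obtain ⟨y, hy, hyx⟩ := hx
    rw [hex]
    exact f.injective hyx ▸ hy
  have key2 : ∀ x y : W, p x = p y → p (f x) = p (f y) := by
    intro x y h
    have h0 : p (f (x - y)) = 0 := key _ (by simp [h])
    have := h0
    rw [map_sub, map_sub, sub_eq_zero] at this
    exact this
  refine ⟨?_, ⟨?_, ?_⟩, ?_, ?_⟩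
  · intro s' _ hs' a
    exact key2 _ _ (by rw [hs, hs'])
  · intro a b hab
    have h0 : p (f (s (a - b))) = 0 := by
      rw [map_sub, map_sub, map_sub, sub_eq_zero]
      exact hab
    have := keyrev _ h0
    rw [hs] at this
    exact sub_eq_zero.mp this
  · intro r
    refine ⟨p (f.symm (s r)), ?_⟩
    have := key2 (s (p (f.symm (s r)))) (f.symm (s r)) (by rw [hs])
    simp only [this, LinearEquiv.apply_symm_apply, hs]
  · intro a
    have h1 := key2 (s (A.D a)) (ES.D (s a)) (by rw [hs, hp.map_D, hs])
    have h2 := hf.map_D (s a)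
    simp only [LinearEquiv.coe_coe] at h2
    rw [h1, h2, hp.map_D]
  · intro lm a b
    have h1 := key2 (s (A.br lm a b)) (ES.br lm (s a) (s b))
      (by rw [hs, hp.map_br, hs, hs])
    have h2 := hf.map_br lm (s a) (s b)
    simp only [LinearEquiv.coe_coe] at h2
    rw [h1, h2, hp.map_br]
end
end

section
/- The assignment κ: Aut_H(E) → Aut(H) × Aut(R), f ↦ (f|_H, f̂), where f̂ = p ∘ f ∘ s, is a group homomorphism. -/
noncomputable section

/-- the assignment `κ : Aut_H(E) → Aut(H) × Aut(R)`,
`f ↦ (f|_H, f̂)` with `f̂ = p ∘ f ∘ s`, is a group homomorphism: both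
components are multiplicative, i.e. `(f ∘ g)|_H = f|_H ∘ g|_H` (where the
restrictions are characterized via `α`) and `(f ∘ g)^ = f̂ ∘ ĝ`. -/
theorem stmt11 {R H W : Type} [AddCommGroup R] [Module ℂ R] [AddCommGroup H] [Module ℂ H]
    [AddCommGroup W] [Module ℂ W]
    (A : LCA R) (B : LCA H) (ES : LCA W)
    (α : H →ₗ[ℂ] W) (p : W →ₗ[ℂ] R)
    (hα : IsHom B ES α) (hp : IsHom ES A p)
    (hinj : Function.Injective α) (hsurj : Function.Surjective p)
    (hex : ∀ x : W, p x = 0 ↔ x ∈ Set.range α)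
    (s : R →ₗ[ℂ] W) (hsD : ∀ a, s (A.D a) = ES.D (s a)) (hs : ∀ a, p (s a) = a)
    (f g : W ≃ₗ[ℂ] W)
    (hf : IsHom ES ES (f : W →ₗ[ℂ] W)) (hg : IsHom ES ES (g : W →ₗ[ℂ] W))
    (hfH : ⇑f '' Set.range ⇑α = Set.range ⇑α) (hgH : ⇑g '' Set.range ⇑α = Set.range ⇑α)
    (fH gH fgH : H →ₗ[ℂ] H)
    (hfHc : ∀ h, f (α h) = α (fH h)) (hgHc : ∀ h, g (α h) = α (gH h))
    (hfgHc : ∀ h, f (g (α h)) = α (fgH h)) :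
    -- restriction component is multiplicative
    (∀ h : H, fgH h = fH (gH h)) ∧
    -- induced automorphism component is multiplicative: (f∘g)^ = f̂ ∘ ĝ
    (∀ a : R, p (f (g (s a))) = p (f (s (p (g (s a)))))) := by
  constructor
  · intro h
    apply hinj
    rw [← hfgHc, ← hfHc, ← hgHc]
  · intro a
    obtain ⟨h, hh⟩ := (hex (g (s a) - s (p (g (s a))))).1 (by simp [hs])
    have h0 : g (s a) = s (p (g (s a))) + α h := by rw [hh]; abel
    rw [h0]
    simp [hs, (hex (α h)).2 ⟨_, rfl⟩, hfHc, (hex (α (fH h))).2 ⟨_, rfl⟩]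
end
end

section
/- Let 𝔤(R,H) be the Lie algebra of compatible derivation pairs and let Φ(d_R,d_H)(f)_λ(a,b) = d_H(f_λ(a,b)) − f_λ(d_R(a),b) − f_λ(a,d_R(b)) for f ∈ C²(R,H). Then for any 2-cocycle f ∈ Z²(R,H), δ(Φ(d_R,d_H)(f)) = 0, i.e. Φ(d_R,d_H) maps 2-cocycles to 2-cocycles. -/
noncomputable section

/-- A conformal module over a Leibniz conformal algebra `A` on `R`:
a `ℂ[∂]`-module `M` with left action `tr` (`a ▷_λ v`) and right action `tl`
(`v ◁_λ a`), satisfying conformal sesquilinearity and the three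
compatibility axioms. -/
structure LMod {R : Type} [AddCommGroup R] [Module ℂ R] (A : LCA R)
    (M : Type) [AddCommGroup M] [Module ℂ M] where
  D : M →ₗ[ℂ] M
  tr : ℂ → R →ₗ[ℂ] M →ₗ[ℂ] M
  tl : ℂ → M →ₗ[ℂ] R →ₗ[ℂ] M
  tr_s1 : ∀ (l : ℂ) (a : R) (v : M), tr l (A.D a) v = (-l) • tr l a v
  tr_s2 : ∀ (l : ℂ) (a : R) (v : M), tr l a (D v) = D (tr l a v) + l • tr l a v
  tl_s1 : ∀ (l : ℂ) (v : M) (a : R), tl l (D v) a = (-l) • tl l v a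
  tl_s2 : ∀ (l : ℂ) (v : M) (a : R), tl l v (A.D a) = D (tl l v a) + l • tl l v a
  comp1 : ∀ (l m : ℂ) (a b : R) (v : M),
    tr l a (tr m b v) = tr (l + m) (A.br l a b) v + tr m b (tr l a v)
  comp2 : ∀ (l m : ℂ) (a : R) (v : M) (b : R),
    tr l a (tl m v b) = tl (l + m) (tr l a v) b + tl m v (A.br l a b)
  comp3 : ∀ (l m : ℂ) (v : M) (a b : R),
    tl l v (A.br m a b) = tl (l + m) (tl l v a) b + tr m a (tl l v b)

/-- The action `Φ(d_R, d_H)` on `H`-valued 2-cochains: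
`Φ(d_R,d_H)(f)_λ(a,b) = d_H(f_λ(a,b)) − f_λ(d_R a, b) − f_λ(a, d_R b)`. -/
def Phi {R H : Type} [AddCommGroup R] [Module ℂ R] [AddCommGroup H] [Module ℂ H]
    (dR : R →ₗ[ℂ] R) (dH : H →ₗ[ℂ] H) (f : ℂ → R → R → H) : ℂ → R → R → H :=
  fun lm a b => dH (f lm a b) - f lm (dR a) b - f lm a (dR b)

/-- The Leibniz conformal coboundary of a 2-cochain with coefficients in the
module `Mo`. -/
def delta2 {R H : Type} [AddCommGroup R] [Module ℂ R] [AddCommGroup H] [Module ℂ H]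
    {A : LCA R} (Mo : LMod A H) (f : ℂ → R → R → H) : ℂ → ℂ → R → R → R → H :=
  fun lm m a b c =>
    Mo.tr lm a (f m b c) - Mo.tr m b (f lm a c) - Mo.tl (lm + m) (f lm a b) c
      - f (lm + m) (A.br lm a b) c - f m b (A.br lm a c) + f lm a (A.br m b c)

/-- for a compatible derivation pair `(d_R, d_H) ∈ 𝔤(R,H)`, the
operator `Φ(d_R,d_H)` sends 2-cocycles to 2-cocycles: if `δf = 0` then
`δ(Φ(d_R,d_H)(f)) = 0`. -/
theorem stmt16 {R H : Type} [AddCommGroup R] [Module ℂ R] [AddCommGroup H] [Module ℂ H]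
    (A : LCA R) (Mo : LMod A H)
    (dR : R →ₗ[ℂ] R) (dH : H →ₗ[ℂ] H)
    (hdRD : ∀ a, dR (A.D a) = A.D (dR a))
    (hdRbr : ∀ (lm : ℂ) (a b : R), dR (A.br lm a b) = A.br lm a (dR b) + A.br lm (dR a) b)
    (hdHD : ∀ h, dH (Mo.D h) = Mo.D (dH h))
    (hg1 : ∀ (lm : ℂ) (a : R) (h : H),
      dH (Mo.tr lm a h) = Mo.tr lm a (dH h) + Mo.tr lm (dR a) h)
    (hg2 : ∀ (lm : ℂ) (h : H) (a : R),
      dH (Mo.tl lm h a) = Mo.tl lm h (dR a) + Mo.tl lm (dH h) a)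
    (f : ℂ → R →ₗ[ℂ] R →ₗ[ℂ] H)
    (hf : ∀ (lm m : ℂ) (a b c : R),
      delta2 Mo (fun lm a b => f lm a b) lm m a b c = 0) :
    ∀ (lm m : ℂ) (a b c : R),
      delta2 Mo (Phi dR dH (fun lm a b => f lm a b)) lm m a b c = 0 := by
  intro lm m a b c
  have e0 := congrArg dH (hf lm m a b c)
  have e1 := hf lm m (dR a) b c
  have e2 := hf lm m a (dR b) c
  have e3 := hf lm m a b (dR c)
  simp only [delta2, Phi, map_sub, map_add, map_zero, hg1, hg2, hdRbr, LinearMap.add_apply, LinearMap.sub_apply] at e0 e1 e2 e3 ⊢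
  linear_combination (norm := abel) e0 - e1 - e2 - e3
end
end

section
/- Let 0 → H →^α E →^p R → 0 be an abelian extension of a Leibniz conformal algebra R by a ℂ[∂]-module H, with induced 2-cocycle χ. A pair (d_R, d_H) ∈ Der^L(R) × Der^L(H) extends to a derivation d_E ∈ Der^L(E) with d_E ∘ α = α ∘ d_H and d_R ∘ p = p ∘ d_E if and only if (d_R, d_H) ∈ 𝔤(R,H) and the class Φ(d_R,d_H)([χ]) vanishes in H²(R,H). -/
noncomputable section

/-- A left derivation of a Leibniz conformal algebra. -/
def IsLeftDer {R : Type} [AddCommGroup R] [Module ℂ R] (A : LCA R) (d : R →ₗ[ℂ] R) : Prop :=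
  (∀ a, d (A.D a) = A.D (d a)) ∧
  ∀ (l : ℂ) (a b : R), d (A.br l a b) = A.br l a (d b) + A.br l (d a) b


section Aux
variable {R : Type} [AddCommGroup R] [Module ℂ R]

lemma ev_zero (l : ℂ) : ev l (0 : PM R) = 0 := Finsupp.sum_zero_index

lemma ev_add (l : ℂ) (p q : PM R) : ev l (p + q) = ev l p + ev l q :=
  Finsupp.sum_add_index' (fun _ => smul_zero _) (fun _ _ _ => smul_add _ _ _)

lemma LCA.br_add_right (A : LCA R) (l : ℂ) (x y z : R) :
    A.br l x (y + z) = A.br l x y + A.br l x z := by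
  unfold LCA.br; rw [map_add, ev_add]

lemma LCA.br_add_left (A : LCA R) (l : ℂ) (x y z : R) :
    A.br l (x + y) z = A.br l x z + A.br l y z := by
  unfold LCA.br; rw [map_add, LinearMap.add_apply, ev_add]

end Aux

/-- for an abelian extension `0 → H →^α E →^p R → 0` of a Leibniz
conformal algebra `R` by a `ℂ[∂]`-module `H`, with induced module structure
`(▷, ◁)` and 2-cocycle `χ`, a pair `(d_R, d_H) ∈ Der^L(R) × Der^L(H)` is
extensible (there is `d_E ∈ Der^L(E)` with `d_E∘α = α∘d_H`, `d_R∘p = p∘d_E`)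
iff `(d_R, d_H) ∈ 𝔤(R,H)` and `Φ(d_R,d_H)(χ)` is a coboundary, i.e.
`𝒲(d_R,d_H) = Φ(d_R,d_H)([χ]) = 0` in `H²(R,H)`. -/
theorem stmt18 {R H W : Type} [AddCommGroup R] [Module ℂ R] [AddCommGroup H] [Module ℂ H]
    [AddCommGroup W] [Module ℂ W]
    (A : LCA R) (ES : LCA W) (DH : H →ₗ[ℂ] H)
    (α : H →ₗ[ℂ] W) (p : W →ₗ[ℂ] R)
    (hαD : ∀ h, α (DH h) = ES.D (α h)) (hp : IsHom ES A p)
    (hinj : Function.Injective α) (hsurj : Function.Surjective p)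
    (hex : ∀ x : W, p x = 0 ↔ x ∈ Set.range α)
    (habelian : ∀ (lm : ℂ) (h1 h2 : H), ES.br lm (α h1) (α h2) = 0)
    (s : R →ₗ[ℂ] W) (hsD : ∀ a, s (A.D a) = ES.D (s a)) (hs : ∀ a, p (s a) = a)
    -- the induced module structure and 2-cocycle, characterized via α:
    (trH : ℂ → R → H → H) (tlH : ℂ → H → R → H) (chiH : ℂ → R → R → H)
    (htrH : ∀ (lm : ℂ) (a : R) (h : H), α (trH lm a h) = ES.br lm (s a) (α h))
    (htlH : ∀ (lm : ℂ) (h : H) (a : R), α (tlH lm h a) = ES.br lm (α h) (s a))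
    (hchiH : ∀ (lm : ℂ) (a b : R),
      α (chiH lm a b) = ES.br lm (s a) (s b) - s (A.br lm a b))
    (dR : R →ₗ[ℂ] R) (dH : H →ₗ[ℂ] H)
    (hdR : IsLeftDer A dR) (hdH : ∀ h, dH (DH h) = DH (dH h)) :
    -- extensibility of the pair (d_R, d_H):
    (∃ dE : W →ₗ[ℂ] W, IsLeftDer ES dE ∧
        (∀ h : H, dE (α h) = α (dH h)) ∧ (∀ x : W, p (dE x) = dR (p x)))
    ↔
    -- (d_R,d_H) ∈ 𝔤(R,H) and 𝒲(d_R,d_H) = 0: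
    (((∀ (lm : ℂ) (a : R) (h : H),
          dH (trH lm a h) = trH lm a (dH h) + trH lm (dR a) h) ∧
      (∀ (lm : ℂ) (h : H) (a : R),
          dH (tlH lm h a) = tlH lm h (dR a) + tlH lm (dH h) a)) ∧
     (∃ f : R →ₗ[ℂ] H, (∀ a, f (A.D a) = DH (f a)) ∧
        ∀ (lm : ℂ) (a b : R),
          Phi dR dH chiH lm a b =
            trH lm a (f b) + tlH lm (f a) b - f (A.br lm a b))) := by
  classical
  -- a set-theoretic retraction π : W → H with α (π x) = x - s (p x)
  have hπ_ex : ∀ x : W, ∃ h : H, α h = x - s (p x) := by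
    intro x
    have h0 : p (x - s (p x)) = 0 := by rw [map_sub, hs, sub_self]
    rcases (hex _).mp h0 with ⟨h, hh⟩
    exact ⟨h, hh⟩
  choose π hπ using hπ_ex
  have hpα0 : ∀ h : H, p (α h) = 0 := fun h => (hex _).mpr ⟨h, rfl⟩
  have hπs : ∀ a : R, π (s a) = 0 := by
    intro a; apply hinj; rw [hπ, hs, sub_self, map_zero]
  have hπα : ∀ h : H, π (α h) = h := by
    intro h; apply hinj; rw [hπ, hpα0, map_zero, sub_zero]
  have hdec : ∀ x : W, x = s (p x) + α (π x) := by
    intro x; rw [hπ]; abel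
  have hss : ∀ (lm : ℂ) (a b : R),
      ES.br lm (s a) (s b) = α (chiH lm a b) + s (A.br lm a b) := by
    intro lm a b; rw [hchiH]; abel
  constructor
  · -- extensible ⇒ compatible and Wells class vanishes
    rintro ⟨dE, ⟨hdED, hdEbr⟩, hdEα, hpdE⟩
    have hpg : ∀ a : R, p (dE (s a) - s (dR a)) = 0 := by
      intro a; rw [map_sub, hpdE, hs, hs, sub_self]
    set f0 : R → H := fun a => π (dE (s a) - s (dR a)) with hf0def
    have hf0 : ∀ a, α (f0 a) = dE (s a) - s (dR a) := by
      intro a; rw [hf0def]; simp only; rw [hπ, hpg, map_zero, sub_zero]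
    have hds : ∀ a, dE (s a) = s (dR a) + α (f0 a) := by
      intro a; rw [hf0]; abel
    refine ⟨⟨?_, ?_⟩, ?_⟩
    · intro lm a h
      apply hinj
      rw [map_add]
      calc α (dH (trH lm a h)) = dE (α (trH lm a h)) := (hdEα _).symm
        _ = dE (ES.br lm (s a) (α h)) := by rw [htrH]
        _ = ES.br lm (s a) (dE (α h)) + ES.br lm (dE (s a)) (α h) := hdEbr lm _ _
        _ = ES.br lm (s a) (α (dH h))
              + (ES.br lm (s (dR a)) (α h) + ES.br lm (α (f0 a)) (α h)) := by
            rw [hdEα, hds, LCA.br_add_left]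
        _ = α (trH lm a (dH h)) + α (trH lm (dR a) h) := by
            rw [habelian, add_zero, htrH, htrH]
    · intro lm h a
      apply hinj
      rw [map_add]
      calc α (dH (tlH lm h a)) = dE (α (tlH lm h a)) := (hdEα _).symm
        _ = dE (ES.br lm (α h) (s a)) := by rw [htlH]
        _ = ES.br lm (α h) (dE (s a)) + ES.br lm (dE (α h)) (s a) := hdEbr lm _ _
        _ = (ES.br lm (α h) (s (dR a)) + ES.br lm (α h) (α (f0 a)))
              + ES.br lm (α (dH h)) (s a) := by
            rw [hdEα, hds, LCA.br_add_right]
        _ = α (tlH lm h (dR a)) + α (tlH lm (dH h) a) := by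
            rw [habelian, add_zero, htlH, htlH]
    · -- the linear map f
      have f0add : ∀ a b, f0 (a + b) = f0 a + f0 b := by
        intro a b; apply hinj
        simp only [map_add, hf0]; abel
      have f0smul : ∀ (c : ℂ) (a : R), f0 (c • a) = c • f0 a := by
        intro c a; apply hinj
        simp only [map_smul, hf0, smul_sub]
      refine ⟨⟨⟨f0, f0add⟩, f0smul⟩, ?_, ?_⟩
      · intro a
        apply hinj
        show α (f0 (A.D a)) = α (DH (f0 a))
        calc α (f0 (A.D a)) = dE (s (A.D a)) - s (dR (A.D a)) := hf0 _
          _ = ES.D (dE (s a)) - ES.D (s (dR a)) := by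
              rw [hsD, hdED, hdR.1, hsD]
          _ = ES.D (α (f0 a)) := by rw [← map_sub, hf0]
          _ = α (DH (f0 a)) := (hαD _).symm
      · intro lm a b
        show Phi dR dH chiH lm a b
            = trH lm a (f0 b) + tlH lm (f0 a) b - f0 (A.br lm a b)
        apply hinj
        have key : α (dH (chiH lm a b)) =
            ES.br lm (s a) (s (dR b)) + ES.br lm (s a) (α (f0 b))
            + (ES.br lm (s (dR a)) (s b) + ES.br lm (α (f0 a)) (s b))
            - (s (dR (A.br lm a b)) + α (f0 (A.br lm a b))) := by
          rw [← hdEα, hchiH, map_sub, hdEbr, hds a, hds b, hds (A.br lm a b),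
            LCA.br_add_right, LCA.br_add_left]
        simp only [Phi, map_sub, map_add]
        rw [key, hchiH lm (dR a) b, hchiH lm a (dR b), htrH, htlH, hdR.2, map_add]
        abel
  · -- compatible + coboundary ⇒ extensible
    rintro ⟨⟨hc1, hc2⟩, f, hfD, hfχ⟩
    have πadd : ∀ x y : W, π (x + y) = π x + π y := by
      intro x y; apply hinj; simp only [map_add, hπ]; abel
    have πsmul : ∀ (c : ℂ) (x : W), π (c • x) = c • π x := by
      intro c x; apply hinj; simp only [map_smul, hπ, smul_sub]
    set πL : W →ₗ[ℂ] H := ⟨⟨π, πadd⟩, πsmul⟩ with hπL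
    set dE : W →ₗ[ℂ] W := s ∘ₗ (dR ∘ₗ p) + α ∘ₗ (dH ∘ₗ πL) + α ∘ₗ (f ∘ₗ p) with hdEdef
    have hdEx : ∀ x : W, dE x = s (dR (p x)) + α (dH (π x)) + α (f (p x)) := by
      intro x; rfl
    have hcompα : ∀ h : H, dE (α h) = α (dH h) := by
      intro h
      rw [hdEx, hpα0, hπα, map_zero, map_zero, map_zero, map_zero, zero_add, add_zero]
    have hdEs : ∀ c : R, dE (s c) = s (dR c) + α (f c) := by
      intro c
      rw [hdEx, hs, hπs, map_zero, map_zero, add_zero]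
    have hcompp : ∀ x : W, p (dE x) = dR (p x) := by
      intro x
      rw [hdEx, map_add, map_add, hs, hpα0, hpα0, add_zero, add_zero]
    have hchid : ∀ (lm : ℂ) (a b : R),
        dH (chiH lm a b) = chiH lm (dR a) b + chiH lm a (dR b)
          + (trH lm a (f b) + tlH lm (f a) b - f (A.br lm a b)) := by
      intro lm a b
      have h1 := hfχ lm a b
      simp only [Phi] at h1
      rw [← h1]; abel
    have hD : ∀ x : W, dE (ES.D x) = ES.D (dE x) := by
      intro x
      have hπD : π (ES.D x) = DH (π x) := by
        apply hinj
        rw [hπ, hp.map_D, hsD, hαD, hπ, map_sub]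
      rw [hdEx, hdEx, hp.map_D, hπD, hdR.1, hdH, hfD, hsD, hαD, hαD, map_add, map_add]
    have hbr : ∀ (lm : ℂ) (x y : W),
        dE (ES.br lm x y) = ES.br lm x (dE y) + ES.br lm (dE x) y := by
      have main : ∀ (lm : ℂ) (a b : R) (h k : H),
          dE (ES.br lm (s a + α h) (s b + α k)) =
            ES.br lm (s a + α h) (dE (s b + α k))
              + ES.br lm (dE (s a + α h)) (s b + α k) := by
        intro lm a b h k
        have e1 : ES.br lm (s a + α h) (s b + α k)
            = α (chiH lm a b) + s (A.br lm a b) + α (trH lm a k) + α (tlH lm h b) := by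
          rw [LCA.br_add_left, LCA.br_add_right, LCA.br_add_right, habelian, hss,
            ← htrH, ← htlH]
          abel
        have e2 : dE (s b + α k) = s (dR b) + α (f b) + α (dH k) := by
          rw [map_add, hdEs, hcompα]
        have e3 : dE (s a + α h) = s (dR a) + α (f a) + α (dH h) := by
          rw [map_add, hdEs, hcompα]
        rw [e1, e2, e3, map_add, map_add, map_add, hcompα, hcompα, hcompα, hdEs]
        simp only [LCA.br_add_left, LCA.br_add_right, habelian, add_zero, zero_add,
          hss, ← htrH, ← htlH]
        rw [hc1, hc2, hchid lm a b, hdR.2, map_add]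
        simp only [map_add, map_sub]
        abel
      intro lm x y
      rw [hdec x, hdec y]
      exact main lm (p x) (p y) (π x) (π y)
    exact ⟨dE, ⟨hD, hbr⟩, hcompα, hcompp⟩
end
end

section
/- For an abelian extension 0 → H → E →^p R → 0 of a Leibniz conformal algebra R by a ℂ[∂]-module H, there is an exact sequence of vector spaces 0 → Z¹(R,H) → Der^L_H(E) →^κ̄ 𝔤(R,H) →^𝒲 H²(R,H), where Der^L_H(E) = {d_E ∈ Der^L(E) | d_E(H) ⊆ H}, κ̄(d_E) = (p∘d_E∘s, d_E|_H), and 𝒲 is the Wells map; exactness means Ker(κ̄) ≅ Z¹(R,H) and Im(κ̄) = Ker(𝒲). -/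
noncomputable section

namespace Stmt19Aux

variable {R : Type} [AddCommGroup R] [Module ℂ R]

/-- `ev l` as a linear map. -/
def evL (l : ℂ) : PM R →ₗ[ℂ] R :=
  Finsupp.lsum ℂ fun n => (l ^ n) • (LinearMap.id : R →ₗ[ℂ] R)

lemma ev_eq (l : ℂ) (q : PM R) : ev l q = evL l q := by
  simp [ev, evL, Finsupp.lsum_apply, Finsupp.sum]

lemma br_def (A : LCA R) (l : ℂ) (a b : R) : A.br l a b = evL l (A.Br a b) :=
  ev_eq l _

lemma br_add_left (A : LCA R) (l : ℂ) (a a' b : R) :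
    A.br l (a + a') b = A.br l a b + A.br l a' b := by
  simp [br_def, map_add]

lemma br_add_right (A : LCA R) (l : ℂ) (a b b' : R) :
    A.br l a (b + b') = A.br l a b + A.br l a b' := by
  simp [br_def, map_add]

lemma br_sub_right (A : LCA R) (l : ℂ) (a b b' : R) :
    A.br l a (b - b') = A.br l a b - A.br l a b' := by
  simp [br_def, map_sub]

end Stmt19Aux

open Stmt19Aux

/-- for an abelian extension `0 → H →^α E →^p R → 0` of a Leibniz
conformal algebra `R` by a `ℂ[∂]`-module `H`, the sequence
`0 → Z¹(R,H) → Der^L_H(E) →^κ̄ 𝔤(R,H) →^𝒲 H²(R,H)` is exact: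
(i) the kernel of `κ̄` is isomorphic to `Z¹(R,H)` (injectivity and surjectivity
of `d_E ↦ d_E ∘ s` onto 1-cocycles), and (ii) a pair in `𝔤(R,H)` lies in the
image of `κ̄` iff its Wells image `𝒲(d_R,d_H) = [Φ(d_R,d_H)(χ)]` vanishes. -/
theorem stmt19 {R H W : Type} [AddCommGroup R] [Module ℂ R] [AddCommGroup H] [Module ℂ H]
    [AddCommGroup W] [Module ℂ W]
    (A : LCA R) (ES : LCA W) (DH : H →ₗ[ℂ] H)
    (α : H →ₗ[ℂ] W) (p : W →ₗ[ℂ] R)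
    (hαD : ∀ h, α (DH h) = ES.D (α h)) (hp : IsHom ES A p)
    (hinj : Function.Injective α) (hsurj : Function.Surjective p)
    (hex : ∀ x : W, p x = 0 ↔ x ∈ Set.range α)
    (habelian : ∀ (lm : ℂ) (h1 h2 : H), ES.br lm (α h1) (α h2) = 0)
    (s : R →ₗ[ℂ] W) (hsD : ∀ a, s (A.D a) = ES.D (s a)) (hs : ∀ a, p (s a) = a)
    (trH : ℂ → R → H → H) (tlH : ℂ → H → R → H) (chiH : ℂ → R → R → H)
    (htrH : ∀ (lm : ℂ) (a : R) (h : H), α (trH lm a h) = ES.br lm (s a) (α h))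
    (htlH : ∀ (lm : ℂ) (h : H) (a : R), α (tlH lm h a) = ES.br lm (α h) (s a))
    (hchiH : ∀ (lm : ℂ) (a b : R),
      α (chiH lm a b) = ES.br lm (s a) (s b) - s (A.br lm a b)) :
    -- exactness at Der^L_H(E): Ker κ̄ ≅ Z¹(R,H)
    ((∀ dE : W →ₗ[ℂ] W, IsLeftDer ES dE → (∀ h : H, dE (α h) = 0) →
        (∀ a : R, dE (s a) = 0) → ∀ x : W, dE x = 0) ∧
     (∀ dE : W →ₗ[ℂ] W, IsLeftDer ES dE → (∀ h : H, dE (α h) = 0) →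
        (∀ a : R, p (dE (s a)) = 0) →
        ∃ f : R →ₗ[ℂ] H, (∀ a, f (A.D a) = DH (f a)) ∧
          (∀ (lm : ℂ) (a b : R),
            f (A.br lm a b) = trH lm a (f b) + tlH lm (f a) b) ∧
          ∀ a : R, α (f a) = dE (s a)) ∧
     (∀ f : R →ₗ[ℂ] H, (∀ a, f (A.D a) = DH (f a)) →
        (∀ (lm : ℂ) (a b : R),
          f (A.br lm a b) = trH lm a (f b) + tlH lm (f a) b) →
        ∃ dE : W →ₗ[ℂ] W, IsLeftDer ES dE ∧ (∀ h : H, dE (α h) = 0) ∧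
          ∀ a : R, dE (s a) = α (f a))) ∧
    -- exactness at 𝔤(R,H): Im κ̄ = Ker 𝒲
    (∀ (dR : R →ₗ[ℂ] R) (dH : H →ₗ[ℂ] H), IsLeftDer A dR →
      (∀ h, dH (DH h) = DH (dH h)) →
      (∀ (lm : ℂ) (a : R) (h : H),
        dH (trH lm a h) = trH lm a (dH h) + trH lm (dR a) h) →
      (∀ (lm : ℂ) (h : H) (a : R),
        dH (tlH lm h a) = tlH lm h (dR a) + tlH lm (dH h) a) →
      ((∃ dE : W →ₗ[ℂ] W, IsLeftDer ES dE ∧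
          (∀ h : H, dE (α h) = α (dH h)) ∧ (∀ a : R, p (dE (s a)) = dR a))
        ↔
       (∃ f : R →ₗ[ℂ] H, (∀ a, f (A.D a) = DH (f a)) ∧
          ∀ (lm : ℂ) (a b : R),
            Phi dR dH chiH lm a b =
              trH lm a (f b) + tlH lm (f a) b - f (A.br lm a b)))) := by
  classical
  obtain ⟨r, hr⟩ := α.exists_leftInverse_of_injective (LinearMap.ker_eq_bot.mpr hinj)
  have hrα : ∀ h : H, r (α h) = h := fun h => by
    simpa using LinearMap.congr_fun hr h
  have hpα : ∀ h : H, p (α h) = 0 := fun h => (hex (α h)).mpr ⟨h, rfl⟩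
  have hαr : ∀ w : W, p w = 0 → α (r w) = w := by
    intro w hw
    obtain ⟨h, rfl⟩ := (hex w).mp hw
    rw [hrα]
  have hdecomp : ∀ x : W, x = s (p x) + α (r (x - s (p x))) := by
    intro x
    rw [hαr _ (by simp [map_sub, hs])]
    abel
  have hss : ∀ (lm : ℂ) (a b : R),
      ES.br lm (s a) (s b) = s (A.br lm a b) + α (chiH lm a b) := by
    intro lm a b; rw [hchiH]; abel
  have hexp : ∀ (lm : ℂ) (a : R) (h : H) (b : R) (k : H),
      ES.br lm (s a + α h) (s b + α k)
        = s (A.br lm a b) + α (chiH lm a b + trH lm a k + tlH lm h b) := by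
    intro lm a h b k
    rw [br_add_left, br_add_right, br_add_right, habelian, hss,
      ← htrH, ← htlH, add_zero, map_add, map_add]
    abel
  have htr_add : ∀ (lm : ℂ) (a : R) (k1 k2 : H),
      trH lm a (k1 + k2) = trH lm a k1 + trH lm a k2 := by
    intro lm a k1 k2
    apply hinj
    simp only [map_add, htrH, br_add_right]
  have htl_add : ∀ (lm : ℂ) (h1 h2 : H) (b : R),
      tlH lm (h1 + h2) b = tlH lm h1 b + tlH lm h2 b := by
    intro lm h1 h2 b
    apply hinj
    simp only [map_add, htlH, br_add_left]
  have hbrx : ∀ (l : ℂ) (x : W) (k : H), ES.br l x (α k) = ES.br l (s (p x)) (α k) := by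
    intro l x k
    conv_lhs => rw [hdecomp x]
    rw [br_add_left, habelian, add_zero]
  have hbry : ∀ (l : ℂ) (k : H) (y : W), ES.br l (α k) y = ES.br l (α k) (s (p y)) := by
    intro l k y
    conv_lhs => rw [hdecomp y]
    rw [br_add_right, habelian, add_zero]
  refine ⟨⟨?_, ?_, ?_⟩, ?_⟩
  · -- injectivity of κ̄ on the kernel
    intro dE hder hH hs0 x
    conv_lhs => rw [hdecomp x]
    rw [map_add, hs0, hH, add_zero]
  · -- kernel elements give 1-cocycles
    intro dE hder hH h0
    set f0 : R →ₗ[ℂ] H := r ∘ₗ dE ∘ₗ s with hf0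
    have hf : ∀ a, α (f0 a) = dE (s a) := fun a => hαr _ (h0 a)
    refine ⟨f0, ?_, ?_, fun a => hf a⟩
    · intro a
      apply hinj
      rw [hf, hsD, hder.1 (s a), ← hf, ← hαD]
    · intro lm a b
      apply hinj
      have hsbr : s (A.br lm a b) = ES.br lm (s a) (s b) - α (chiH lm a b) := by
        rw [hchiH]; abel
      rw [hf, hsbr, map_sub, hH, sub_zero, hder.2 lm (s a) (s b), ← hf, ← hf,
        map_add, htrH, htlH]
  · -- 1-cocycles give kernel elements
    intro f hfD hfbr
    refine ⟨(α ∘ₗ f) ∘ₗ p, ⟨?_, ?_⟩, ?_, ?_⟩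
    · intro x
      show α (f (p (ES.D x))) = ES.D (α (f (p x)))
      rw [hp.map_D, hfD, hαD]
    · intro l x y
      show α (f (p (ES.br l x y)))
        = ES.br l x (α (f (p y))) + ES.br l (α (f (p x))) y
      rw [hp.map_br, hfbr, map_add, htrH, htlH, hbrx l x, hbry l _ y]
    · intro h
      show α (f (p (α h))) = 0
      rw [hpα, map_zero, map_zero]
    · intro a
      show α (f (p (s a))) = α (f a)
      rw [hs]
  · -- exactness at 𝔤(R,H)
    intro dR dH hdR hdHD hdHtr hdHtl
    constructor
    · rintro ⟨dE, hder, hEα, hEs⟩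
      set g : R →ₗ[ℂ] H := r ∘ₗ (dE ∘ₗ s - s ∘ₗ dR) with hg
      have hgα : ∀ a, α (g a) = dE (s a) - s (dR a) := by
        intro a
        exact hαr _ (by simp [map_sub, hEs, hs])
      have hdEs : ∀ a, dE (s a) = s (dR a) + α (g a) := by
        intro a; rw [hgα]; abel
      refine ⟨g, ?_, ?_⟩
      · intro a
        apply hinj
        rw [hgα, hsD, hder.1 (s a), hdEs, hdR.1, hsD (dR a), map_add, ← hαD]
        abel
      · intro lm a b
        apply hinj
        simp only [Phi, map_sub, map_add, ← hEα]
        rw [hchiH lm a b, map_sub, hder.2 lm (s a) (s b)]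
        simp only [hdEs, br_add_left, br_add_right, habelian, hss,
          ← htrH, ← htlH, hdR.2, map_add]
        abel
    · rintro ⟨f, hfD, hPhi⟩
      set q : W →ₗ[ℂ] H := r ∘ₗ (LinearMap.id - s ∘ₗ p) with hqdef
      have hq : ∀ x, α (q x) = x - s (p x) := fun x => hαr _ (by simp [map_sub, hs])
      have hdec : ∀ x : W, x = s (p x) + α (q x) := by
        intro x; rw [hq]; abel
      set dE : W →ₗ[ℂ] W := (α ∘ₗ dH ∘ₗ q) + (s ∘ₗ dR + α ∘ₗ f) ∘ₗ p with hdEdef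
      have hdEx : ∀ x, dE x = α (dH (q x)) + (s (dR (p x)) + α (f (p x))) :=
        fun x => rfl
      have hqα : ∀ h, q (α h) = h := by
        intro h; apply hinj; rw [hq, hpα, map_zero, sub_zero]
      have hqs : ∀ a, q (s a) = 0 := by
        intro a; apply hinj; rw [hq, hs, sub_self, map_zero]
      have hdEα : ∀ h, dE (α h) = α (dH h) := by
        intro h
        simp [hdEx, hqα, hpα]
      have hdEs2 : ∀ a, dE (s a) = s (dR a) + α (f a) := by
        intro a
        simp [hdEx, hqs, hs]
      have hkey : ∀ (lm : ℂ) (a b : R),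
          dH (chiH lm a b)
            = trH lm a (f b) + tlH lm (f a) b - f (A.br lm a b)
              + (chiH lm (dR a) b + chiH lm a (dR b)) := by
        intro lm a b
        have h1 := hPhi lm a b
        simp only [Phi] at h1
        rw [sub_sub, sub_eq_iff_eq_add] at h1
        exact h1
      refine ⟨dE, ⟨?_, ?_⟩, hdEα, ?_⟩
      · intro x
        have hpD : p (ES.D x) = A.D (p x) := hp.map_D x
        have hqD : q (ES.D x) = DH (q x) := by
          apply hinj
          rw [hq, hpD, hsD, ← map_sub, ← hq, ← hαD]
        rw [hdEx, hdEx x, hqD, hpD, hdHD, hdR.1, hfD, hαD, hαD, hsD, map_add, map_add]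
      · intro l x y
        have hdEy : dE y = s (dR (p y)) + α (dH (q y) + f (p y)) := by
          rw [hdEx, map_add]; abel
        have hdExx : dE x = s (dR (p x)) + α (dH (q x) + f (p x)) := by
          rw [hdEx, map_add]; abel
        have hB : ES.br l x y
            = s (A.br l (p x) (p y))
              + α (chiH l (p x) (p y) + trH l (p x) (q y) + tlH l (q x) (p y)) := by
          conv_lhs => rw [hdec x, hdec y]
          exact hexp l (p x) (q x) (p y) (q y)
        have e1 : ES.br l x (dE y)
            = s (A.br l (p x) (dR (p y)))
              + α (chiH l (p x) (dR (p y)) + trH l (p x) (dH (q y) + f (p y))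
                + tlH l (q x) (dR (p y))) := by
          conv_lhs => rw [hdec x, hdEy]
          exact hexp l (p x) (q x) (dR (p y)) (dH (q y) + f (p y))
        have e2 : ES.br l (dE x) y
            = s (A.br l (dR (p x)) (p y))
              + α (chiH l (dR (p x)) (p y) + trH l (dR (p x)) (q y)
                + tlH l (dH (q x) + f (p x)) (p y)) := by
          conv_lhs => rw [hdExx, hdec y]
          exact hexp l (dR (p x)) (dH (q x) + f (p x)) (p y) (q y)
        rw [hB, map_add, hdEs2, hdEα, e1, e2]
        simp only [map_add, hkey, hdHtr, hdHtl, htr_add, htl_add, hdR.2, map_sub]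
        abel
      · intro a
        rw [hdEs2 a, map_add, hs, hpα, add_zero]
end
end
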